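/- arXiv:2011.04129 — 3 statements merged into one kernel-verified Lean document; each statement's English description precedes it below -/
import Mathlib

section
/- Let A be a real tensor of size n1×n2×n3 and B a real tensor of size n2×l×n3, and let C = A∗B be their t-product, i.e. the n1×l×n3 tensor with unfold(C) = bcirc(A)·unfold(B). Then for every k = 1,…,n3 the frontal slices of the DFTs satisfy Ĉ^{(k)} = Â^{(k)} · B̂^{(k)} (matrix product). -/
/-! The hypothesis says that `C` is the cyclic convolution `C⁽ʳ⁾ = Σₜ A⁽ʳ⁻ᵗ⁾ B⁽ᵗ⁾` of the
slice sequences, indexed by `ℤ/n3`. Since `ω ^ n3 = 1`, the map `t ↦ ω ^ (k t)` is a character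
of `ℤ/n3`, so the `k`-th DFT coefficient turns the convolution into a product: the
convolution theorem. -/

open Matrix BigOperators Finset Kronecker

noncomputable section

/-- The DFT of a complex third-order tensor (given by its frontal slices) along the
third dimension: `Â⁽ᵏ⁾ = Σₜ ω^(k·t) A⁽ᵗ⁾` with `ω = exp(-2πi/n3)` (0-based indices). -/
def cdft {n1 n2 n3 : ℕ} (A : Fin n3 → Matrix (Fin n1) (Fin n2) ℂ) :
    Fin n3 → Matrix (Fin n1) (Fin n2) ℂ :=
  fun k => ∑ t : Fin n3,
    (Complex.exp (-(2 * Real.pi * Complex.I) / (n3 : ℂ))) ^ ((k : ℕ) * (t : ℕ)) • A t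

/-- The DFT along the third dimension of a real third-order tensor. -/
def rdft {n1 n2 n3 : ℕ} (A : Fin n3 → Matrix (Fin n1) (Fin n2) ℝ) :
    Fin n3 → Matrix (Fin n1) (Fin n2) ℂ :=
  cdft (fun t => (A t).map (fun x => (x : ℂ)))

/-- The block circulant matrix of a third-order tensor: the (k,l) block is the
frontal slice `A⁽ᵏ⁻ˡ mod n3⁾` (0-based). -/
def bcirc {α : Type*} {n1 n2 n3 : ℕ} (A : Fin n3 → Matrix (Fin n1) (Fin n2) α) :
    Matrix (Fin n3 × Fin n1) (Fin n3 × Fin n2) α :=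
  Matrix.of fun p q => A (p.1 - q.1) p.2 q.2

/-- The block diagonal matrix whose diagonal blocks are the frontal slices. -/
def bdiag {α : Type*} [Zero α] {n1 n2 n3 : ℕ} (A : Fin n3 → Matrix (Fin n1) (Fin n2) α) :
    Matrix (Fin n3 × Fin n1) (Fin n3 × Fin n2) α :=
  Matrix.of fun p q => if p.1 = q.1 then A p.1 p.2 q.2 else 0

/-- `unfold` stacks the frontal slices vertically. -/
def unfoldT {α : Type*} {n1 l n3 : ℕ} (B : Fin n3 → Matrix (Fin n1) (Fin l) α) :
    Matrix (Fin n3 × Fin n1) (Fin l) α :=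
  Matrix.of fun p j => B p.1 p.2 j

/-- The t-product `A ∗ B`, determined by `unfold (A ∗ B) = bcirc A * unfold B`. -/
def tprodT {n1 n2 l n3 : ℕ} (A : Fin n3 → Matrix (Fin n1) (Fin n2) ℝ)
    (B : Fin n3 → Matrix (Fin n2) (Fin l) ℝ) : Fin n3 → Matrix (Fin n1) (Fin l) ℝ :=
  fun k => Matrix.of fun i j => (bcirc A * unfoldT B) (k, i) j

/-- Conjugate transpose of a real tensor: transpose each frontal slice and reverse
the order of the transposed slices 2 through n3 (0-based: slice k ↦ (A(-k))ᵀ). -/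
def ctransT {n1 n2 n3 : ℕ} (A : Fin n3 → Matrix (Fin n1) (Fin n2) ℝ) :
    Fin n3 → Matrix (Fin n2) (Fin n1) ℝ :=
  fun k => (A (-k))ᵀ

/-- The identity tensor: identity matrix as first frontal slice, zeros elsewhere. -/
def idT (q n3 : ℕ) [NeZero n3] : Fin n3 → Matrix (Fin q) (Fin q) ℝ :=
  fun k => if k = 0 then (1 : Matrix (Fin q) (Fin q) ℝ) else 0

/-- The Frobenius norm of a real third-order tensor. -/
def frobT {n1 n2 n3 : ℕ} (A : Fin n3 → Matrix (Fin n1) (Fin n2) ℝ) : ℝ :=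
  Real.sqrt (∑ k, ∑ i, ∑ j, (A k i j) ^ 2)

/-- The nuclear norm of a complex matrix: the sum of the square roots of the
eigenvalues of `Mᴴ * M` (i.e. the sum of the singular values). -/
def nuclearNorm {m n : ℕ} (M : Matrix (Fin m) (Fin n) ℂ) : ℝ :=
  ∑ i, Real.sqrt ((Matrix.isHermitian_conjTranspose_mul_self M).eigenvalues i)

/-- The tensor nuclear norm: `(1/n3) Σₖ ‖Â⁽ᵏ⁾‖₊`. -/
def tnn {n1 n2 n3 : ℕ} (D : Fin n3 → Matrix (Fin n1) (Fin n2) ℝ) : ℝ :=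
  (1 / (n3 : ℝ)) * ∑ k, nuclearNorm (rdft D k)

/-- The tensor L_{2,1}-norm: `Σⱼ √(Σᵢ Σₖ D i j k ²)`. -/
def l21 {n1 n2 n3 : ℕ} (D : Fin n3 → Matrix (Fin n1) (Fin n2) ℝ) : ℝ :=
  ∑ j : Fin n2, Real.sqrt (∑ i : Fin n1, ∑ k : Fin n3, (D k i j) ^ 2)

/-- The n×n DFT matrix with (p,q)-entry `ω^(p·q)`, `ω = exp(-2πi/n)` (0-based). -/
def dftMatrix (n : ℕ) : Matrix (Fin n) (Fin n) ℂ :=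
  Matrix.of fun p q =>
    (Complex.exp (-(2 * Real.pi * Complex.I) / (n : ℂ))) ^ ((p : ℕ) * (q : ℕ))

/-- A tensor `Q` is orthogonal if `Q* ∗ Q = Q ∗ Q* = I`. -/
def isOrthogonalT {n n3 : ℕ} [NeZero n3] (Q : Fin n3 → Matrix (Fin n) (Fin n) ℝ) : Prop :=
  tprodT (ctransT Q) Q = idT n n3 ∧ tprodT Q (ctransT Q) = idT n n3


section BlockCirculant

variable {α : Type*} {n1 n2 l n3 : ℕ}

theorem unfoldT_injective :
    Function.Injective (unfoldT : (Fin n3 → Matrix (Fin n1) (Fin l) α) → _) :=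
  fun _ _ h => funext fun k => Matrix.ext fun i j => congrFun (congrFun h (k, i)) j

theorem unfoldT_map {β : Type*} (f : α → β) (B : Fin n3 → Matrix (Fin n1) (Fin l) α) :
    (unfoldT B).map f = unfoldT fun t => (B t).map f :=
  rfl

theorem bcirc_map {β : Type*} (f : α → β) (A : Fin n3 → Matrix (Fin n1) (Fin n2) α) :
    (bcirc A).map f = bcirc fun t => (A t).map f :=
  rfl

theorem bcirc_mul_unfoldT [NonUnitalNonAssocSemiring α] (A : Fin n3 → Matrix (Fin n1) (Fin n2) α)
    (B : Fin n3 → Matrix (Fin n2) (Fin l) α) :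
    bcirc A * unfoldT B = unfoldT fun r => ∑ t, A (r - t) * B t := by
  ext ⟨r, i⟩ j
  simp only [mul_apply, bcirc, unfoldT, of_apply, Fintype.sum_prod_type, Matrix.sum_apply]

end BlockCirculant

theorem sum_smul_conv_eq_mul {G R m p q : Type*} [AddCommGroup G] [Fintype G] [CommSemiring R]
    [Fintype p] (χ : G → R) (hχ : ∀ s t, χ (s + t) = χ s * χ t) (A : G → Matrix m p R)
    (B : G → Matrix p q R) :
    ∑ r, χ r • ∑ t, A (r - t) * B t = (∑ s, χ s • A s) * ∑ t, χ t • B t :=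
  calc ∑ r, χ r • ∑ t, A (r - t) * B t = ∑ t, ∑ r, χ r • (A (r - t) * B t) := by
        simp_rw [smul_sum]
        exact sum_comm
    _ = ∑ t, ∑ s, χ (s + t) • (A s * B t) := by
        refine sum_congr rfl fun t _ => ?_
        exact Fintype.sum_equiv (Equiv.subRight t) _ _ fun r => by
          simp only [Equiv.subRight_apply, sub_add_cancel]
    _ = ∑ t, ∑ s, (χ s • A s) * (χ t • B t) := by
        simp_rw [hχ, Matrix.smul_mul, Matrix.mul_smul, smul_smul]
    _ = (∑ s, χ s • A s) * ∑ t, χ t • B t := by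
        simp_rw [Matrix.sum_mul, Matrix.mul_sum]
        exact sum_comm

theorem pow_val_add_of_pow_eq_one {M : Type*} [Monoid M] {ζ : M} {n : ℕ} (hζ : ζ ^ n = 1)
    (s t : Fin n) : ζ ^ ((s + t : Fin n) : ℕ) = ζ ^ (s : ℕ) * ζ ^ (t : ℕ) := by
  rw [Fin.val_add, ← pow_eq_pow_mod _ hζ, pow_add]

theorem exp_neg_two_pi_I_div_pow_self (n : ℕ) :
    Complex.exp (-(2 * Real.pi * Complex.I) / n) ^ n = 1 := by
  rcases eq_or_ne n 0 with rfl | hn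
  · exact pow_zero _
  · rw [neg_div, Complex.exp_neg, inv_pow, (Complex.isPrimitiveRoot_exp n hn).pow_eq_one, inv_one]

theorem rdft_eq_cdft_map {n1 n2 n3 : ℕ} (A : Fin n3 → Matrix (Fin n1) (Fin n2) ℝ) :
    rdft A = cdft fun t => (A t).map Complex.ofRealHom :=
  rfl

theorem cdft_conv {n1 n2 l n3 : ℕ} [NeZero n3] (A : Fin n3 → Matrix (Fin n1) (Fin n2) ℂ)
    (B : Fin n3 → Matrix (Fin n2) (Fin l) ℂ) (k : Fin n3) :
    cdft (fun r => ∑ t, A (r - t) * B t) k = cdft A k * cdft B k := by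
  simp only [cdft, pow_mul]
  refine sum_smul_conv_eq_mul _ (fun s t => pow_val_add_of_pow_eq_one ?_ s t) A B
  rw [pow_right_comm, exp_neg_two_pi_I_div_pow_self, one_pow]

/-- if `C = A ∗ B` (i.e. `unfold C = bcirc A · unfold B`), then
`Ĉ⁽ᵏ⁾ = Â⁽ᵏ⁾ · B̂⁽ᵏ⁾` for every k. -/
theorem tproduct_dft_slicewise (n1 n2 l n3 : ℕ)
    (A : Fin n3 → Matrix (Fin n1) (Fin n2) ℝ)
    (B : Fin n3 → Matrix (Fin n2) (Fin l) ℝ)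
    (C : Fin n3 → Matrix (Fin n1) (Fin l) ℝ)
    (hC : unfoldT C = bcirc A * unfoldT B) :
    ∀ k, rdft C k = rdft A k * rdft B k := by
  intro k
  have : NeZero n3 := NeZero.of_pos k.pos
  have hC_complex : (unfoldT C).map Complex.ofRealHom =
      (bcirc A * unfoldT B).map Complex.ofRealHom := by
    rw [hC]
  rw [Matrix.map_mul, bcirc_map, unfoldT_map, unfoldT_map, bcirc_mul_unfoldT] at hC_complex
  rw [rdft_eq_cdft_map, rdft_eq_cdft_map, rdft_eq_cdft_map, unfoldT_injective hC_complex]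
  exact cdft_conv (fun t => (A t).map Complex.ofRealHom) (fun t => (B t).map Complex.ofRealHom) k
end
end

section
/- (T-QR) Every real third-order tensor A of size n1×n2×n3 can be factored as A = Q ∗ R, where Q ∈ ℝ^{n1×n1×n3} is an orthogonal tensor (Q^*∗Q = Q∗Q^* = I) and R ∈ ℝ^{n1×n2×n3} has every frontal slice upper triangular (R_{i,j,k} = 0 whenever i > j). -/
/-!
Taking the DFT along the third mode turns the t-product into the slice-wise matrix product,
the conjugate transpose into the slice-wise conjugate transpose and the identity tensor into
identity slices. So it suffices to factor every Fourier slice `Â⁽ᵏ⁾ = Uₖ Tₖ` with `Uₖ` unitary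
and `Tₖ` upper triangular, and to transform back. The inverse transforms are real exactly when
the factors inherit the symmetry `Â⁽⁻ᵏ⁾ = conj Â⁽ᵏ⁾` of a real tensor: factor one slice of each
pair `{k, -k}` and conjugate the factors for its partner; a slice with `-k = k` is real and gets
a real QR factorization.
-/

open Matrix BigOperators Finset Kronecker

noncomputable section

namespace Matrix

def IsUpperTrapezoidal {α : Type*} [Zero α] {a b : ℕ} (T : Matrix (Fin a) (Fin b) α) : Prop :=
  ∀ (i : Fin a) (j : Fin b), (j : ℕ) < (i : ℕ) → T i j = 0

theorem IsUpperTrapezoidal.map {α β : Type*} [Zero α] [Zero β] {a b : ℕ}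
    {T : Matrix (Fin a) (Fin b) α} (hT : T.IsUpperTrapezoidal) {f : α → β} (hf : f 0 = 0) :
    (T.map f).IsUpperTrapezoidal := fun i j hji => by
  simp [hT i j hji, hf]

/-- Gram–Schmidt applied to the columns of `M`, padded by zeros to `a` vectors, yields an
orthonormal basis in which the `j`-th column only involves the first `j + 1` basis vectors. -/
theorem exists_qr {𝕜 : Type*} [RCLike 𝕜] {a b : ℕ} (M : Matrix (Fin a) (Fin b) 𝕜) :
    ∃ U ∈ unitaryGroup (Fin a) 𝕜, ∃ T : Matrix (Fin a) (Fin b) 𝕜,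
      T.IsUpperTrapezoidal ∧ M = U * T := by
  let std := EuclideanSpace.basisFun (Fin a) 𝕜
  let col : Fin b → EuclideanSpace 𝕜 (Fin a) := fun j => WithLp.toLp 2 (fun i => M i j)
  let f : Fin a → EuclideanSpace 𝕜 (Fin a) := fun i => if h : (i : ℕ) < b then col ⟨i, h⟩ else 0
  let B := InnerProductSpace.gramSchmidtOrthonormalBasis (𝕜 := 𝕜) (by simp) f
  refine ⟨std.toBasis.toMatrix B, std.toMatrix_orthonormalBasis_mem_unitary B,
    B.toBasis.toMatrix col, fun i j hji => ?_, ?_⟩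
  · have hf : f ⟨j, hji.trans i.isLt⟩ = col j := dif_pos j.isLt
    simpa [Module.Basis.toMatrix_apply, hf] using
      InnerProductSpace.gramSchmidtOrthonormalBasis_inv_triangular' _ f (Fin.mk_lt_of_lt_val hji)
  · rw [← B.coe_toBasis, Module.Basis.toMatrix_mul_toMatrix]
    ext i j
    simp [Module.Basis.toMatrix_apply, std, col]

theorem map_mem_unitaryGroup {n R S : Type*} [Fintype n] [DecidableEq n] [CommRing R]
    [StarRing R] [CommRing S] [StarRing S] (f : R →+* S) (hf : ∀ x, f (star x) = star (f x))
    {U : Matrix n n R} (hU : U ∈ unitaryGroup n R) : U.map f ∈ unitaryGroup n S := by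
  rw [mem_unitaryGroup_iff, star_eq_conjTranspose, ← conjTranspose_map f hf, ← Matrix.map_mul,
    ← star_eq_conjTranspose, mem_unitaryGroup_iff.1 hU, Matrix.map_one f (map_zero f) (map_one f)]

theorem map_re_map_ofReal_of_map_conj {m n : Type*} {M : Matrix m n ℂ}
    (hM : M.map (starRingEnd ℂ) = M) : (M.map Complex.re).map (↑) = M := by
  ext i j
  exact Complex.conj_eq_iff_re.1 (congrFun₂ hM i j)

end Matrix

theorem exists_semiconj_of_involutive {ι β : Type*} [LinearOrder ι] {τ : ι → ι}
    (hτ : Function.Involutive τ) {σ : β → β} (hσ : Function.Involutive σ) {P : ι → β → Prop}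
    (hP : ∀ k b, P k b → P (τ k) (σ b)) (hex : ∀ k, ∃ b, P k b)
    (hfix : ∀ k, τ k = k → ∃ b, σ b = b ∧ P k b) :
    ∃ g : ι → β, (∀ k, P k (g k)) ∧ Function.Semiconj g τ σ := by
  classical
  choose b hb using hex
  let c k := if h : τ k = k then (hfix k h).choose else b k
  have hc k (h : τ k = k) : σ (c k) = c k ∧ P k (c k) := by
    simpa only [c, dif_pos h] using (hfix k h).choose_spec
  refine ⟨fun k => if k < τ k then b k else if τ k < k then σ (b (τ k)) else c k, ?_, ?_⟩
  · intro k
    dsimp only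
    split_ifs with h₁ h₂
    · exact hb k
    · simpa [hτ k] using hP _ _ (hb (τ k))
    · exact (hc k (le_antisymm (not_lt.1 h₁) (not_lt.1 h₂))).2
  · intro k
    rcases lt_trichotomy k (τ k) with h | h | h
    · simp [hτ k, h, not_lt_of_gt h]
    · simp [← h, (hc k h.symm).1]
    · simp [hτ k, h, not_lt_of_gt h, hσ _]

theorem exists_qr_of_conj_symm {ι : Type*} [LinearOrder ι] [InvolutiveNeg ι] {a b : ℕ}
    (M : ι → Matrix (Fin a) (Fin b) ℂ) (hM : ∀ k, M (-k) = (M k).map (starRingEnd ℂ)) :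
    ∃ U : ι → Matrix (Fin a) (Fin a) ℂ, ∃ T : ι → Matrix (Fin a) (Fin b) ℂ,
      (∀ k, U (-k) = (U k).map (starRingEnd ℂ)) ∧ (∀ k, T (-k) = (T k).map (starRingEnd ℂ)) ∧
      (∀ k, U k ∈ unitaryGroup (Fin a) ℂ) ∧ (∀ k, (T k).IsUpperTrapezoidal) ∧
      ∀ k, M k = U k * T k := by
  let conj₂ (p : Matrix (Fin a) (Fin a) ℂ × Matrix (Fin a) (Fin b) ℂ) :=
    (p.1.map (starRingEnd ℂ), p.2.map (starRingEnd ℂ))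
  have hconj₂ : Function.Involutive conj₂ := fun p => by ext <;> simp [conj₂]
  obtain ⟨g, hg, hgconj⟩ := exists_semiconj_of_involutive neg_involutive hconj₂
    (P := fun k p => p.1 ∈ unitaryGroup (Fin a) ℂ ∧ p.2.IsUpperTrapezoidal ∧ M k = p.1 * p.2)
    (fun k p ⟨hU, hT, hMk⟩ => ⟨map_mem_unitaryGroup _ (fun _ => rfl) hU, hT.map (map_zero _),
      by rw [hM, hMk, Matrix.map_mul]⟩)
    (fun k => by
      obtain ⟨U, hU, T, hT, hMk⟩ := exists_qr (M k)
      exact ⟨(U, T), hU, hT, hMk⟩)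
    (fun k hk => by
      have hreal : (M k).map (starRingEnd ℂ) = M k := by rw [← hM, hk]
      obtain ⟨U, hU, T, hT, hMk⟩ := exists_qr ((M k).map Complex.re)
      refine ⟨(U.map (↑), T.map (↑)), by ext <;> simp [conj₂],
        map_mem_unitaryGroup Complex.ofRealHom (fun x => (Complex.conj_ofReal x).symm) hU,
        hT.map Complex.ofReal_zero, ?_⟩
      rw [← map_re_map_ofReal_of_map_conj hreal, hMk]
      exact Matrix.map_mul (f := Complex.ofRealHom))
  exact ⟨fun k => (g k).1, fun k => (g k).2, fun k => congrArg Prod.fst (hgconj k),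
    fun k => congrArg Prod.snd (hgconj k), fun k => (hg k).1, fun k => (hg k).2.1,
    fun k => (hg k).2.2⟩

namespace ZMod

variable {N : ℕ} [NeZero N] {l m n : Type*}

theorem dft_matrix_apply (Φ : ZMod N → Matrix m n ℂ) (k : ZMod N) (i : m) (j : n) :
    𝓕 Φ k i j = 𝓕 (fun s => Φ s i j) k := by
  simp [dft_apply, Matrix.sum_apply]

theorem conj_dft (φ : ZMod N → ℂ) (k : ZMod N) :
    starRingEnd ℂ (𝓕 φ k) = 𝓕 (fun j => starRingEnd ℂ (φ j)) (-k) := by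
  simp only [dft_apply, map_sum, smul_eq_mul, map_mul, ← AddChar.map_neg_eq_conj, mul_neg, neg_neg]

theorem dft_map_conj (Φ : ZMod N → Matrix m n ℂ) (k : ZMod N) :
    (𝓕 Φ k).map (starRingEnd ℂ) = 𝓕 (fun j => (Φ j).map (starRingEnd ℂ)) (-k) := by
  ext i j
  simp only [map_apply, dft_matrix_apply, conj_dft]

theorem dft_conjTranspose (Φ : ZMod N → Matrix m n ℂ) (k : ZMod N) :
    (𝓕 Φ k)ᴴ = 𝓕 (fun j => (Φ (-j))ᴴ) k := by
  ext i j
  simp only [conjTranspose_apply, dft_matrix_apply, RCLike.star_def, conj_dft]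
  exact (congrFun (dft_comp_neg _) k).symm

theorem invDFT_map_conj (Ψ : ZMod N → Matrix m n ℂ) (k : ZMod N) :
    (𝓕⁻ Ψ k).map (starRingEnd ℂ) = 𝓕⁻ (fun j => (Ψ (-j)).map (starRingEnd ℂ)) k := by
  ext i j
  simp only [map_apply, invDFT_apply', Matrix.smul_apply, dft_matrix_apply, smul_eq_mul, map_mul,
    map_inv₀, map_natCast, conj_dft]
  congr 1
  exact (congrFun (dft_comp_neg fun s => starRingEnd ℂ (Ψ s i j)) (-k)).symm

theorem dft_conv [Fintype m] (Φ : ZMod N → Matrix l m ℂ) (Ψ : ZMod N → Matrix m n ℂ)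
    (k : ZMod N) : 𝓕 (fun s => ∑ j, Φ (s - j) * Ψ j) k = 𝓕 Φ k * 𝓕 Ψ k := by
  simp only [dft_apply, Finset.smul_sum, Matrix.sum_mul, Matrix.mul_sum, Matrix.smul_mul,
    Matrix.mul_smul, smul_smul]
  rw [Finset.sum_comm]
  refine Finset.sum_congr rfl fun j _ => ?_
  rw [← Equiv.sum_comp (Equiv.addRight j)]
  refine Finset.sum_congr rfl fun s _ => ?_
  simp [← AddChar.map_add_eq_mul, add_mul]

theorem dft_single_zero (M : Matrix m n ℂ) (k : ZMod N) : 𝓕 (Pi.single 0 M) k = M := by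
  simp [dft_apply, Pi.single_apply]

end ZMod

open Fin.CommRing in
theorem ZMod.finEquiv_apply {n : ℕ} [NeZero n] (t : Fin n) :
    ZMod.finEquiv n t = ((t : ℕ) : ZMod n) := by
  conv_lhs => rw [← Fin.cast_val_eq_self t]
  exact map_natCast (ZMod.finEquiv n) _

section TensorDFT

open ZMod

variable {n1 n2 n3 : ℕ}

theorem tprodT_apply {l : ℕ} (A : Fin n3 → Matrix (Fin n1) (Fin n2) ℝ)
    (B : Fin n3 → Matrix (Fin n2) (Fin l) ℝ) (k : Fin n3) :
    tprodT A B k = ∑ m, A (k - m) * B m := by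
  ext i j
  simp only [tprodT, of_apply, mul_apply, Matrix.sum_apply, Fintype.sum_prod_type]
  rfl

variable [NeZero n3]

theorem rdft_eq_dft (A : Fin n3 → Matrix (Fin n1) (Fin n2) ℝ) (k : Fin n3) :
    rdft A k = 𝓕 (fun j => (A ((finEquiv n3).symm j)).map (↑)) (finEquiv n3 k) := by
  rw [dft_apply, ← Equiv.sum_comp (finEquiv n3).toEquiv, rdft, cdft]
  refine Finset.sum_congr rfl fun t _ => ?_
  simp only [RingEquiv.toEquiv_eq_coe, EquivLike.coe_coe, RingEquiv.symm_apply_apply]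
  rw [finEquiv_apply, finEquiv_apply]
  congr 1
  have hcast : -(((t : ℕ) : ZMod n3) * ((k : ℕ) : ZMod n3)) =
      ((-((t * k : ℕ) : ℤ) : ℤ) : ZMod n3) := by
    push_cast
    ring
  rw [hcast, stdAddChar_coe, ← Complex.exp_nat_mul]
  congr 1
  push_cast
  ring

theorem rdft_tprodT {l : ℕ} (A : Fin n3 → Matrix (Fin n1) (Fin n2) ℝ)
    (B : Fin n3 → Matrix (Fin n2) (Fin l) ℝ) (k : Fin n3) :
    rdft (tprodT A B) k = rdft A k * rdft B k := by
  rw [rdft_eq_dft, rdft_eq_dft, rdft_eq_dft, ← dft_conv]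
  refine congrArg (𝓕 · _) (funext fun s => ?_)
  rw [tprodT_apply, ← Equiv.sum_comp (finEquiv n3).symm.toEquiv]
  ext i j
  simp [Matrix.sum_apply, mul_apply]

theorem rdft_ctransT (A : Fin n3 → Matrix (Fin n1) (Fin n2) ℝ) (k : Fin n3) :
    rdft (ctransT A) k = (rdft A k)ᴴ := by
  rw [rdft_eq_dft, rdft_eq_dft, dft_conjTranspose]
  refine congrArg (𝓕 · _) (funext fun s => ?_)
  ext
  simp [ctransT]

theorem rdft_idT (n : ℕ) (k : Fin n3) : rdft (idT n n3) k = 1 := by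
  rw [rdft_eq_dft, ← dft_single_zero (1 : Matrix (Fin n) (Fin n) ℂ) (finEquiv n3 k)]
  refine congrArg (𝓕 · _) (funext fun s => ?_)
  by_cases hs : s = 0 <;> simp [idT, hs]

theorem rdft_neg (A : Fin n3 → Matrix (Fin n1) (Fin n2) ℝ) (k : Fin n3) :
    rdft A (-k) = (rdft A k).map (starRingEnd ℂ) := by
  rw [rdft_eq_dft, rdft_eq_dft, dft_map_conj, map_neg]
  refine congrArg (𝓕 · _) (funext fun s => ?_)
  ext
  simp

theorem rdft_apply_apply (A : Fin n3 → Matrix (Fin n1) (Fin n2) ℝ) (k : Fin n3) (i : Fin n1)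
    (j : Fin n2) :
    rdft A k i j = 𝓕 (fun s => (A ((finEquiv n3).symm s) i j : ℂ)) (finEquiv n3 k) := by
  rw [rdft_eq_dft, dft_matrix_apply]
  rfl

theorem rdft_injective : Function.Injective (rdft (n1 := n1) (n2 := n2) (n3 := n3)) := by
  intro A B h
  funext t
  ext i j
  have hF : 𝓕 (fun s => (A ((finEquiv n3).symm s) i j : ℂ))
      = 𝓕 (fun s => (B ((finEquiv n3).symm s) i j : ℂ)) := by
    funext s
    simpa [rdft_apply_apply] using congrFun₃ h ((finEquiv n3).symm s) i j
  simpa using congrFun (dft.injective hF) (finEquiv n3 t)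

theorem apply_eq_zero_of_rdft_apply_eq_zero {A : Fin n3 → Matrix (Fin n1) (Fin n2) ℝ}
    {i : Fin n1} {j : Fin n2} (h : ∀ k, rdft A k i j = 0) (t : Fin n3) : A t i j = 0 := by
  have hF : 𝓕 (fun s => (A ((finEquiv n3).symm s) i j : ℂ)) = 0 := by
    funext s
    simpa [rdft_apply_apply] using h ((finEquiv n3).symm s)
  simpa using congrFun ((map_eq_zero_iff _ dft.injective).1 hF) (finEquiv n3 t)

theorem exists_rdft_eq (V : Fin n3 → Matrix (Fin n1) (Fin n2) ℂ)
    (hV : ∀ k, V (-k) = (V k).map (starRingEnd ℂ)) : ∃ A, rdft A = V := by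
  let Φ := 𝓕⁻ (fun s => V ((finEquiv n3).symm s))
  have hΦ : ∀ s, (Φ s).map (starRingEnd ℂ) = Φ s := by
    intro s
    rw [invDFT_map_conj]
    refine congrArg (𝓕⁻ · s) (funext fun r => ?_)
    rw [map_neg, hV]
    ext
    simp
  refine ⟨fun t => (Φ (finEquiv n3 t)).map Complex.re, funext fun k => ?_⟩
  simp [rdft_eq_dft, map_re_map_ofReal_of_map_conj (hΦ _), Φ]

theorem isOrthogonalT_of_rdft_mem_unitaryGroup {n : ℕ} {Q : Fin n3 → Matrix (Fin n) (Fin n) ℝ}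
    (hQ : ∀ k, rdft Q k ∈ unitaryGroup (Fin n) ℂ) : isOrthogonalT Q := by
  constructor <;> refine rdft_injective (funext fun k => ?_) <;>
    rw [rdft_tprodT, rdft_ctransT, rdft_idT, ← star_eq_conjTranspose]
  exacts [mem_unitaryGroup_iff'.1 (hQ k), mem_unitaryGroup_iff.1 (hQ k)]

end TensorDFT

/-- T-QR: every real third-order tensor factors as `A = Q ∗ R`
with Q orthogonal and every frontal slice of R upper triangular. -/
theorem tqr_exists (n1 n2 n3 : ℕ) [NeZero n3]
    (A : Fin n3 → Matrix (Fin n1) (Fin n2) ℝ) :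
    ∃ (Q : Fin n3 → Matrix (Fin n1) (Fin n1) ℝ)
      (R : Fin n3 → Matrix (Fin n1) (Fin n2) ℝ),
      isOrthogonalT Q ∧
      (∀ k (i : Fin n1) (j : Fin n2), (j : ℕ) < (i : ℕ) → R k i j = 0) ∧
      A = tprodT Q R := by
  obtain ⟨U, T, hUconj, hTconj, hU, hT, hUT⟩ := exists_qr_of_conj_symm (rdft A) (rdft_neg A)
  obtain ⟨Q, rfl⟩ := exists_rdft_eq U hUconj
  obtain ⟨R, rfl⟩ := exists_rdft_eq T hTconj
  refine ⟨Q, R, isOrthogonalT_of_rdft_mem_unitaryGroup hU,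
    fun k i j hji => apply_eq_zero_of_rdft_apply_eq_zero (fun k => hT k i j hji) k,
    rdft_injective (funext fun k => ?_)⟩
  rw [rdft_tprodT, hUT]
end
end

section
/- Let D be a real third-order tensor of size n1×n2×n3. Then its tensor nuclear norm is bounded by its tensor L_{2,1}-norm: ‖D‖_* ≤ ‖D‖_{2,1}. -/
open Matrix BigOperators Finset Kronecker

noncomputable section

/-! The nuclear norm of a complex matrix `M` is at most the sum of the Euclidean norms of its
columns: the diagonal of `Mᴴ * M` is the image of its eigenvalues under the doubly stochastic
matrix `(‖U i j‖²)` of a unitary eigenbasis, and `√` is concave. Applied to each slice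
`D̂⁽ᵏ⁾` and averaged over `k` with Jensen's inequality for `√`, this reduces the claim to
Parseval's identity `Σₖ ‖x̂ₖ‖² = n3 Σₜ ‖xₜ‖²` for every tube `x = D(i, j, :)`. -/

theorem ConcaveOn.sum_le_sum_mulVec_of_mem_doublyStochastic {𝕜 β n : Type*} [Field 𝕜]
    [LinearOrder 𝕜] [IsStrictOrderedRing 𝕜] [AddCommGroup β] [PartialOrder β]
    [IsOrderedAddMonoid β] [Module 𝕜 β] [IsStrictOrderedModule 𝕜 β] [Fintype n] [DecidableEq n]
    {s : Set 𝕜} {f : 𝕜 → β} (hf : ConcaveOn 𝕜 s f) {W : Matrix n n 𝕜}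
    (hW : W ∈ doublyStochastic 𝕜 n) {x : n → 𝕜} (hx : ∀ i, x i ∈ s) :
    ∑ i, f (x i) ≤ ∑ j, f ((W *ᵥ x) j) :=
  calc ∑ i, f (x i) = ∑ j, ∑ i, W j i • f (x i) := by
        rw [Finset.sum_comm]
        simp_rw [← Finset.sum_smul, sum_col_of_mem_doublyStochastic hW, one_smul]
    _ ≤ ∑ j, f (∑ i, W j i • x i) := Finset.sum_le_sum fun j _ =>
        hf.le_map_sum (fun i _ => hW.1 j i) (sum_row_of_mem_doublyStochastic hW j) fun i _ => hx i
    _ = ∑ j, f ((W *ᵥ x) j) := rfl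

theorem Matrix.of_norm_sq_mem_doublyStochastic_of_mem_unitaryGroup {𝕜 n : Type*} [RCLike 𝕜]
    [Fintype n] [DecidableEq n] {U : Matrix n n 𝕜} (hU : U ∈ unitaryGroup n 𝕜) :
    (of fun i j => ‖U i j‖ ^ 2) ∈ doublyStochastic ℝ n := by
  have hrow (i : n) : ∑ j, (‖U i j‖ ^ 2 : 𝕜) = 1 := by
    simpa [Matrix.mul_apply, RCLike.mul_conj, one_apply] using
      congr_fun₂ (mem_unitaryGroup_iff.mp hU) i i
  have hcol (j : n) : ∑ i, (‖U i j‖ ^ 2 : 𝕜) = 1 := by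
    simpa [Matrix.mul_apply, RCLike.conj_mul, one_apply] using
      congr_fun₂ (mem_unitaryGroup_iff'.mp hU) j j
  refine mem_doublyStochastic_iff_sum.2 ⟨fun _ _ => sq_nonneg _, fun i => ?_, fun j => ?_⟩
  · exact_mod_cast hrow i
  · exact_mod_cast hcol j

theorem Matrix.IsHermitian.re_apply_self_eq_mulVec_eigenvalues {𝕜 n : Type*} [RCLike 𝕜]
    [Fintype n] [DecidableEq n] {A : Matrix n n 𝕜} (hA : A.IsHermitian) (j : n) :
    RCLike.re (A j j) =
      ((of fun i k => ‖(hA.eigenvectorUnitary : Matrix n n 𝕜) i k‖ ^ 2) *ᵥ hA.eigenvalues) j := by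
  conv_lhs => rw [hA.spectral_theorem]
  simp only [Unitary.conjStarAlgAut_apply, mul_apply, diagonal_apply, star_apply,
    Function.comp_apply, mul_ite, mul_zero, Finset.sum_ite_eq', Finset.mem_univ, if_true]
  simp_rw [mul_right_comm _ (RCLike.ofReal _ : 𝕜), RCLike.star_def, RCLike.mul_conj, map_sum,
    ← RCLike.ofReal_pow, ← RCLike.ofReal_mul, RCLike.ofReal_re]
  rfl

open scoped ComplexOrder

theorem Matrix.PosSemidef.sum_sqrt_eigenvalues_le_sum_sqrt_re_diag {𝕜 n : Type*} [RCLike 𝕜]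
    [Fintype n] [DecidableEq n] {A : Matrix n n 𝕜} (hA : A.PosSemidef) :
    ∑ i, √(hA.1.eigenvalues i) ≤ ∑ j, √(RCLike.re (A j j)) := by
  simp_rw [hA.1.re_apply_self_eq_mulVec_eigenvalues]
  exact Real.strictConcaveOn_sqrt.concaveOn.sum_le_sum_mulVec_of_mem_doublyStochastic
    (of_norm_sq_mem_doublyStochastic_of_mem_unitaryGroup hA.1.eigenvectorUnitary.2)
    hA.eigenvalues_nonneg

theorem nuclearNorm_le_sum_sqrt_sum_norm_sq {m n : ℕ} (M : Matrix (Fin m) (Fin n) ℂ) :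
    nuclearNorm M ≤ ∑ j, √(∑ i, ‖M i j‖ ^ 2) := by
  have hdiag (j : Fin n) : RCLike.re ((Mᴴ * M) j j) = ∑ i, ‖M i j‖ ^ 2 := by
    simp [mul_apply, RCLike.conj_mul, ← Complex.ofReal_pow, Complex.ofReal_re]
  simpa only [nuclearNorm, hdiag] using
    (posSemidef_conjTranspose_mul_self M).sum_sqrt_eigenvalues_le_sum_sqrt_re_diag

theorem dftMatrix_conjTranspose_mul_self (n : ℕ) :
    (dftMatrix n)ᴴ * dftMatrix n = (n : ℂ) • 1 := by
  rcases Nat.eq_zero_or_pos n with rfl | hn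
  · exact Subsingleton.elim _ _
  set ω := Complex.exp (-(2 * Real.pi * Complex.I) / (n : ℂ))
  have hω : IsPrimitiveRoot ω n := by
    simpa [ω, neg_div, Complex.exp_neg] using (Complex.isPrimitiveRoot_exp n hn.ne').inv
  set c := star ω
  have hcω : c * ω = 1 := by
    rw [show c = (starRingEnd ℂ) ω from rfl, Complex.conj_mul', hω.norm'_eq_one hn.ne']
    simp
  have hcn : c ^ n = 1 := by rw [← star_pow, hω.pow_eq_one, star_one]
  ext s t
  set z := c ^ (s : ℕ) * ω ^ (t : ℕ)
  have hsum : ((dftMatrix n)ᴴ * dftMatrix n) s t = ∑ k ∈ Finset.range n, z ^ k := by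
    rw [← Fin.sum_univ_eq_sum_range,
      show dftMatrix n = of fun p q : Fin n => ω ^ ((p : ℕ) * q) from rfl]
    simp only [mul_apply, conjTranspose_apply, of_apply, pow_mul', star_pow, mul_pow, z, c]
  rw [hsum, Matrix.smul_apply, one_apply, smul_eq_mul, mul_ite, mul_one, mul_zero]
  split_ifs with hst
  · simp [z, hst, ← mul_pow, hcω]
  · have hz1 : z ≠ 1 := fun h => hst <| Fin.ext <| hω.pow_inj s.2 t.2 <|
      calc ω ^ (s : ℕ) = ω ^ (s : ℕ) * z := by rw [h, mul_one]
        _ = ω ^ (t : ℕ) := by rw [← mul_assoc, ← mul_pow, mul_comm ω, hcω, one_pow, one_mul]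
    have hzn : z ^ n = 1 := by
      rw [mul_pow, pow_right_comm c, pow_right_comm ω, hcn, hω.pow_eq_one, one_pow, one_pow,
        one_mul]
    refine eq_zero_of_ne_zero_of_mul_left_eq_zero (sub_ne_zero_of_ne hz1.symm) ?_
    rw [mul_neg_geom_sum, hzn, sub_self]

theorem sum_norm_sq_dftMatrix_mulVec (n : ℕ) (x : Fin n → ℂ) :
    ∑ k, ‖(dftMatrix n *ᵥ x) k‖ ^ 2 = n * ∑ t, ‖x t‖ ^ 2 := by
  have hdot (y : Fin n → ℂ) : ((∑ k, ‖y k‖ ^ 2 : ℝ) : ℂ) = star y ⬝ᵥ y := by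
    simp [dotProduct, Complex.conj_mul']
  apply Complex.ofReal_injective
  rw [hdot, Complex.ofReal_mul, hdot, star_mulVec, ← dotProduct_mulVec, mulVec_mulVec,
    dftMatrix_conjTranspose_mul_self, smul_mulVec, one_mulVec, dotProduct_smul, smul_eq_mul,
    Complex.ofReal_natCast]

theorem rdft_apply {n1 n2 n3 : ℕ} (D : Fin n3 → Matrix (Fin n1) (Fin n2) ℝ) (k : Fin n3)
    (i : Fin n1) (j : Fin n2) : rdft D k i j = (dftMatrix n3 *ᵥ fun t => (D t i j : ℂ)) k := by
  simp [rdft, cdft, dftMatrix, mulVec, dotProduct, Matrix.sum_apply]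

theorem sum_sum_norm_sq_rdft {n1 n2 n3 : ℕ} (D : Fin n3 → Matrix (Fin n1) (Fin n2) ℝ)
    (j : Fin n2) : ∑ k, ∑ i, ‖rdft D k i j‖ ^ 2 = n3 * ∑ i, ∑ t, D t i j ^ 2 := by
  rw [Finset.sum_comm, Finset.mul_sum]
  simp_rw [rdft_apply, sum_norm_sq_dftMatrix_mulVec, Complex.norm_real, Real.norm_eq_abs, sq_abs]

theorem Real.inv_card_mul_sum_sqrt_le {ι : Type*} [Fintype ι] [Nonempty ι] {a : ι → ℝ}
    (ha : ∀ i, 0 ≤ a i) :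
    (Fintype.card ι : ℝ)⁻¹ * ∑ i, √(a i) ≤ √((Fintype.card ι : ℝ)⁻¹ * ∑ i, a i) := by
  simpa [Finset.mul_sum] using Real.strictConcaveOn_sqrt.concaveOn.le_map_sum
    (t := Finset.univ) (w := fun _ => (Fintype.card ι : ℝ)⁻¹) (p := a) (by simp)
    (by simp) fun i _ => ha i

/-- the tensor nuclear norm is bounded by the tensor L_{2,1}-norm. -/
theorem tensor_nuclear_le_l21 (n1 n2 n3 : ℕ)
    (D : Fin n3 → Matrix (Fin n1) (Fin n2) ℝ) :
    tnn D ≤ l21 D := by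
  rcases Nat.eq_zero_or_pos n3 with rfl | hn
  · simp [tnn, l21]
  have : Nonempty (Fin n3) := ⟨⟨0, hn⟩⟩
  calc tnn D ≤ 1 / n3 * ∑ k, ∑ j, √(∑ i, ‖rdft D k i j‖ ^ 2) := by
        unfold tnn
        gcongr with k
        exact nuclearNorm_le_sum_sqrt_sum_norm_sq _
    _ = ∑ j, (n3 : ℝ)⁻¹ * ∑ k, √(∑ i, ‖rdft D k i j‖ ^ 2) := by
        rw [Finset.sum_comm, Finset.mul_sum, one_div]
    _ ≤ ∑ j, √((n3 : ℝ)⁻¹ * ∑ k, ∑ i, ‖rdft D k i j‖ ^ 2) := by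
        gcongr with j
        simpa using Real.inv_card_mul_sum_sqrt_le (ι := Fin n3) fun k => by positivity
    _ = l21 D := by
        have hn3 : (n3 : ℝ) ≠ 0 := Nat.cast_ne_zero.2 hn.ne'
        simp_rw [sum_sum_norm_sq_rdft, inv_mul_cancel_left₀ hn3]
        rfl
end
end
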